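/- Let M be a type, let B and L be disjoint subsets of M, and let 𝒟 be a nonempty collection of finite subsets of M with some element disjoint from L. With dB, dBL, dB' as in the depth setup (minima of |D ∩ B| over 𝒟, of |D ∩ (B ∪ L)| over 𝒟, and of |D ∩ B| over disks disjoint from L, respectively), one has: dBL = 1 and 1 ≤ dB implies dB' = 1, and conversely dB' = 1 together with 1 ≤ dB implies dBL = 1. -/

import Mathlib

/-!
A minimum over a set of naturals is `1` exactly when `1` is attained and `0` is not. Since every
disk meets `B`, `0` is attained by none of the three counts. A disk disjoint from `L` meets `B ∪ L`
exactly where it meets `B`; conversely a disk with a single point on `B ∪ L` has that point on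
`B`, hence misses `L`. So the value `1` is attained by the count on `B ∪ L` iff it is attained by
the count on `B` over disks missing `L`.
-/

theorem Nat.sInf_eq_one_iff {s : Set ℕ} : sInf s = 1 ↔ 1 ∈ s ∧ 0 ∉ s := by
  constructor
  · intro h
    refine ⟨h ▸ Nat.sInf_mem (Nat.nonempty_of_sInf_eq_succ h), Nat.notMem_of_lt_sInf ?_⟩
    rw [h]
    exact one_pos
  · rintro ⟨h1, h0⟩
    refine le_antisymm (Nat.sInf_le h1) (Nat.one_le_iff_ne_zero.mpr fun hs => h0 ?_)
    exact hs ▸ Nat.sInf_mem ⟨1, h1⟩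

namespace Set

variable {M : Type*} {s B L : Set M}

theorem inter_union_eq_inter_left_of_inter_eq_empty (h : s ∩ L = ∅) : s ∩ (B ∪ L) = s ∩ B := by
  rw [inter_union_distrib_left, h, union_empty]

theorem ncard_inter_eq_one_of_ncard_inter_union_eq_one (hs : s.Finite) (hBL : Disjoint B L)
    (h : (s ∩ (B ∪ L)).ncard = 1) (hB : (s ∩ B).ncard ≠ 0) :
    s ∩ L = ∅ ∧ (s ∩ B).ncard = 1 := by
  have hsplit : (s ∩ (B ∪ L)).ncard = (s ∩ B).ncard + (s ∩ L).ncard := by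
    rw [inter_union_distrib_left]
    exact ncard_union_eq (hBL.mono inter_subset_right inter_subset_right)
      (hs.inter_of_left B) (hs.inter_of_left L)
  refine ⟨(ncard_eq_zero (hs.inter_of_left L)).mp ?_, ?_⟩ <;> omega

end Set

theorem stmt_5_general {M : Type*} (B L : Set M) (hBL : Disjoint B L)
    (𝒟 : Set (Finset M))
    (dB dBL dB' : ℕ)
    (hdB : dB = sInf {n : ℕ | ∃ D ∈ 𝒟, ((D : Set M) ∩ B).ncard = n})
    (hdBL : dBL = sInf {n : ℕ | ∃ D ∈ 𝒟, ((D : Set M) ∩ (B ∪ L)).ncard = n})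
    (hdB' : dB' = sInf {n : ℕ | ∃ D ∈ 𝒟, (D : Set M) ∩ L = ∅ ∧ ((D : Set M) ∩ B).ncard = n}) :
    (dBL = 1 → 1 ≤ dB → dB' = 1) ∧ (dB' = 1 → 1 ≤ dB → dBL = 1) := by
  subst hdB hdBL hdB'
  have meets_B (hB : 1 ≤ sInf {n : ℕ | ∃ D ∈ 𝒟, ((D : Set M) ∩ B).ncard = n}) (E : Finset M)
      (hE : E ∈ 𝒟) : ((E : Set M) ∩ B).ncard ≠ 0 :=
    fun hE0 => Nat.notMem_of_lt_sInf hB ⟨E, hE, hE0⟩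
  simp only [Nat.sInf_eq_one_iff]
  constructor
  · rintro ⟨⟨D, hD, hD1⟩, -⟩ hB
    obtain ⟨hDL, hDB⟩ := Set.ncard_inter_eq_one_of_ncard_inter_union_eq_one D.finite_toSet hBL hD1
      (meets_B hB D hD)
    exact ⟨⟨D, hD, hDL, hDB⟩, fun ⟨E, hE, _, hE0⟩ => meets_B hB E hE hE0⟩
  · rintro ⟨⟨D, hD, hDL, hD1⟩, -⟩ hB
    refine ⟨⟨D, hD, by rwa [Set.inter_union_eq_inter_left_of_inter_eq_empty hDL]⟩, ?_⟩
    rintro ⟨E, hE, hE0⟩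
    refine meets_B hB E hE (Nat.eq_zero_of_le_zero (hE0 ▸ Set.ncard_le_ncard ?_ ?_))
    · exact Set.inter_subset_inter_right _ Set.subset_union_left
    · exact E.finite_toSet.inter_of_left _

theorem stmt_5 {M : Type*} (B L : Set M) (hBL : Disjoint B L)
    (𝒟 : Set (Finset M)) (h𝒟 : 𝒟.Nonempty)
    (hex : ∃ D ∈ 𝒟, (D : Set M) ∩ L = ∅)
    (dB dBL dB' : ℕ)
    (hdB : dB = sInf {n : ℕ | ∃ D ∈ 𝒟, ((D : Set M) ∩ B).ncard = n})
    (hdBL : dBL = sInf {n : ℕ | ∃ D ∈ 𝒟, ((D : Set M) ∩ (B ∪ L)).ncard = n})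
    (hdB' : dB' = sInf {n : ℕ | ∃ D ∈ 𝒟, (D : Set M) ∩ L = ∅ ∧ ((D : Set M) ∩ B).ncard = n}) :
    (dBL = 1 → 1 ≤ dB → dB' = 1) ∧ (dB' = 1 → 1 ≤ dB → dBL = 1) :=
  stmt_5_general B L hBL 𝒟 dB dBL dB' hdB hdBL hdB'
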